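/- If x and y are commuting elements of order 2 in SO(3) with x ≠ y, then for any lifts x̃, ỹ of x, y in SU(2) under the double cover SU(2) → SO(3), the commutator [x̃, ỹ] equals -I. -/

import Mathlib

open Matrix
open scoped commutatorElement

/-- `SU2` : the special unitary group of 2×2 complex matrices, as a subgroup of the
unitary group. -/
def SU2 : Subgroup (Matrix.unitaryGroup (Fin 2) ℂ) :=
  MonoidHom.ker (Matrix.detMonoidHom.comp (Submonoid.subtype _))

/-- Build an element of `SU2` from a unitary matrix of determinant one. -/
def mkSU2 (M : Matrix (Fin 2) (Fin 2) ℂ) (hU : M ∈ Matrix.unitaryGroup (Fin 2) ℂ)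
    (hdet : M.det = 1) : SU2 :=
  ⟨⟨M, hU⟩, MonoidHom.mem_ker.mpr hdet⟩

/-- `-I₂` as an element of `SU2`. -/
def negOne : SU2 :=
  mkSU2 (-1) (by rw [Matrix.mem_unitaryGroup_iff]; simp)
    (by simp [Matrix.det_neg])

lemma negOne_comm (g : SU2) : Commute g negOne := by
  apply Subtype.ext; apply Subtype.ext
  show (g.1.1 : Matrix (Fin 2) (Fin 2) ℂ) * (-1) = (-1) * g.1.1
  simp

instance : (Subgroup.zpowers negOne).Normal := by
  constructor
  intro n hn g
  obtain ⟨k, rfl⟩ := hn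
  show g * negOne ^ k * g⁻¹ ∈ Subgroup.zpowers negOne
  have h2 : g * negOne ^ k * g⁻¹ = negOne ^ k := by
    rw [((negOne_comm g).zpow_right k).eq, mul_assoc, mul_inv_cancel, mul_one]
  rw [h2]
  exact Subgroup.zpow_mem_zpowers negOne k

/-- The double cover projection `SU2 → SO3 = SU2/{±1}`. -/
def piSU2 : SU2 →* SU2 ⧸ Subgroup.zpowers negOne := QuotientGroup.mk' _

/-! By Cayley–Hamilton a 2×2 matrix of determinant one satisfies `M * M = tr M • M - 1`, so the
only square roots of `1` in SU(2) are `±1`. Hence a lift of an involution of SO(3) squares to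
`-1`. The commutator of the lifts maps to `1`, so it is `±1`; were it `1`, the lifts would
commute, their product would square to `(-1) * (-1) = 1`, so would be `±1`, and the two
involutions would coincide. -/

namespace Matrix

theorem mul_self_eq_trace_smul_sub_det_smul {R : Type*} [CommRing R]
    (M : Matrix (Fin 2) (Fin 2) R) :
    M * M = M.trace • M - M.det • 1 := by
  rw [eta_fin_two M]
  ext i j
  fin_cases i <;> fin_cases j <;>
    simp [trace_fin_two, det_fin_two, mul_apply, Fin.sum_univ_two] <;> ring

theorem eq_one_or_eq_neg_one_of_mul_self_eq_one {K : Type*} [Field K] [NeZero (2 : K)]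
    {M : Matrix (Fin 2) (Fin 2) K} (hdet : M.det = 1) (hM : M * M = 1) : M = 1 ∨ M = -1 := by
  have htM : M.trace • M = (2 : K) • 1 := by
    have hCH := M.mul_self_eq_trace_smul_sub_det_smul
    rw [hM, hdet, one_smul] at hCH
    rw [two_smul]; exact sub_eq_iff_eq_add.mp hCH.symm
  have ht : M.trace * M.trace = 2 * 2 := by simpa using congrArg trace htM
  rcases mul_self_eq_mul_self_iff.mp ht with h | h
  · left
    rw [h] at htM
    exact smul_right_injective _ two_ne_zero htM
  · right
    rw [h, neg_smul, neg_eq_iff_eq_neg, ← smul_neg] at htM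
    exact smul_right_injective _ two_ne_zero htM

end Matrix

section QuotientByInvolution

open Subgroup QuotientGroup

variable {G : Type*} [Group G] {z : G}

theorem mem_zpowers_iff_eq_one_or_eq (hz : z * z = 1) {g : G} :
    g ∈ zpowers z ↔ g = 1 ∨ g = z := by
  refine ⟨?_, by rintro (rfl | rfl) <;> simp⟩
  rintro ⟨k, rfl⟩
  have hz2 : z ^ 2 = 1 := by rw [sq, hz]
  obtain ⟨m, rfl | rfl⟩ := Int.even_or_odd' k <;>
    simp [_root_.zpow_add, _root_.zpow_mul, hz2]

variable [(zpowers z).Normal]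

theorem mul_self_eq_of_orderOf_mk_eq_two (hz : z * z = 1)
    (hsq : ∀ g : G, g * g = 1 → g = 1 ∨ g = z) {a : G}
    (ha : orderOf (a : G ⧸ zpowers z) = 2) : a * a = z := by
  obtain ⟨ha2, ha1⟩ := orderOf_eq_prime_iff.mp ha
  have hmem : a * a ∈ zpowers z := by rw [← eq_one_iff, mk_mul, ← sq, ha2]
  refine ((mem_zpowers_iff_eq_one_or_eq hz).mp hmem).resolve_left fun h => ha1 ?_
  rw [eq_one_iff, mem_zpowers_iff_eq_one_or_eq hz]
  exact hsq a h

theorem commutatorElement_eq_of_orderOf_mk_eq_two (hz : z * z = 1)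
    (hsq : ∀ g : G, g * g = 1 → g = 1 ∨ g = z) {a b : G}
    (ha : orderOf (a : G ⧸ zpowers z) = 2) (hb : orderOf (b : G ⧸ zpowers z) = 2)
    (hcomm : (a : G ⧸ zpowers z) * b = b * a) (hne : (a : G ⧸ zpowers z) ≠ b) :
    ⁅a, b⁆ = z := by
  have hmem : ⁅a, b⁆ ∈ zpowers z := by
    rw [← eq_one_iff, ← mk'_apply, map_commutatorElement, mk'_apply, mk'_apply,
      commutatorElement_eq_one_iff_mul_comm]
    exact hcomm
  refine ((mem_zpowers_iff_eq_one_or_eq hz).mp hmem).resolve_left fun h => hne ?_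
  have hlift : Commute a b := commutatorElement_eq_one_iff_mul_comm.mp h
  have hab : a * b * (a * b) = 1 := by
    rw [hlift.symm.mul_mul_mul_comm, mul_self_eq_of_orderOf_mk_eq_two hz hsq ha,
      mul_self_eq_of_orderOf_mk_eq_two hz hsq hb, hz]
  have hab_mk : (a : G ⧸ zpowers z) * b = 1 := by
    rw [← mk_mul, eq_one_iff, mem_zpowers_iff_eq_one_or_eq hz]
    exact hsq _ hab
  have hb2 : (b : G ⧸ zpowers z) * b = 1 := by rw [← sq, ← hb, pow_orderOf_eq_one]
  exact (mul_eq_one_iff_eq_inv.mp hab_mk).trans (inv_eq_of_mul_eq_one_right hb2)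

end QuotientByInvolution

theorem negOne_mul_self : negOne * negOne = 1 :=
  Subtype.ext <| Subtype.ext <| by simp [negOne, mkSU2]

theorem eq_one_or_eq_negOne_of_mul_self_eq_one {g : SU2} (h : g * g = 1) :
    g = 1 ∨ g = negOne := by
  have hdet : (g : unitaryGroup (Fin 2) ℂ).1.det = 1 := MonoidHom.mem_ker.mp g.2
  rcases eq_one_or_eq_neg_one_of_mul_self_eq_one hdet (congrArg (fun g : SU2 => g.1.1) h)
    with h1 | h1
  · exact Or.inl (Subtype.ext (Subtype.ext h1))
  · exact Or.inr (Subtype.ext (Subtype.ext h1))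

/-- If `x` and `y` are distinct commuting order-2 elements of `SO3 = SU2/{±1}`, then any
lifts `x̃`, `ỹ` to SU(2) have commutator `⁅x̃, ỹ⁆ = -I`. -/
theorem commutator_of_lifts_of_commuting_involutions
    (x y : SU2 ⧸ Subgroup.zpowers negOne)
    (hx : orderOf x = 2) (hy : orderOf y = 2)
    (hcomm : x * y = y * x) (hxy : x ≠ y)
    (xt yt : SU2) (hxt : piSU2 xt = x) (hyt : piSU2 yt = y) :
    ⁅xt, yt⁆ = negOne := by
  subst hxt hyt
  exact commutatorElement_eq_of_orderOf_mk_eq_two negOne_mul_self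
    (fun _ => eq_one_or_eq_negOne_of_mul_self_eq_one) hx hy hcomm hxy
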